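/- Let u : ℝ³ → ℝ³ be smooth with def u = 0, i.e., ∂_i u_j + ∂_j u_i = 0 for all i,j. Then there exist c ∈ ℝ³ and b ∈ ℝ³ such that u(x) = c + b × x for all x, i.e., u is an infinitesimal rigid body motion. -/

import Mathlib

noncomputable def pd {n : ℕ} (i : Fin n) (f : (Fin n → ℝ) → ℝ) (x : Fin n → ℝ) : ℝ :=
  fderiv ℝ f x (Pi.single i 1)

lemma pd_contDiff {n : ℕ} (i : Fin n) {f : (Fin n → ℝ) → ℝ} (hf : ContDiff ℝ (⊤ : ℕ∞) f) :
    ContDiff ℝ (⊤ : ℕ∞) (pd i f) :=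
  (hf.fderiv_right (by simp)).clm_apply contDiff_const

lemma pd_symm {n : ℕ} (i j : Fin n) {f : (Fin n → ℝ) → ℝ} (hf : ContDiff ℝ (⊤ : ℕ∞) f)
    (x : Fin n → ℝ) : pd i (pd j f) x = pd j (pd i f) x := by
  have key : ∀ a b : Fin n, pd a (pd b f) x
      = fderiv ℝ (fderiv ℝ f) x (Pi.single a 1) (Pi.single b 1) := by
    intro a b
    have h1 : DifferentiableAt ℝ (fderiv ℝ f) x :=
      ((hf.fderiv_right (m := 1) (by exact WithTop.coe_le_coe.mpr le_top)).differentiable one_ne_zero).differentiableAt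
    unfold pd
    rw [fderiv_clm_apply (c := fderiv ℝ f) (u := fun _ => Pi.single b 1) h1
      (differentiableAt_const _)]
    simp
  rw [key i j, key j i]
  exact second_derivative_symmetric
    (fun y => (hf.differentiable (by simp)).differentiableAt.hasFDerivAt)
    (((hf.fderiv_right (m := 1) (by exact WithTop.coe_le_coe.mpr le_top)).differentiable one_ne_zero).differentiableAt.hasFDerivAt) _ _

lemma pd_add {n : ℕ} (a : Fin n) {p q : (Fin n → ℝ) → ℝ} (x : Fin n → ℝ)
    (hp : DifferentiableAt ℝ p x) (hq : DifferentiableAt ℝ q x) :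
    pd a (fun y => p y + q y) x = pd a p x + pd a q x := by
  unfold pd; rw [fderiv_fun_add hp hq]; simp

lemma clm_ext_basis {n : ℕ} {L M : (Fin n → ℝ) →L[ℝ] ℝ}
    (h : ∀ i, L (Pi.single i 1) = M (Pi.single i 1)) : L = M := by
  apply ContinuousLinearMap.coe_injective
  apply Module.Basis.ext (Pi.basisFun ℝ (Fin n))
  intro i
  simpa using h i

theorem stmt9 (u : (Fin 3 → ℝ) → (Fin 3 → ℝ)) (hu : ContDiff ℝ (⊤ : ℕ∞) u)
    (hdef : ∀ (x : Fin 3 → ℝ) (i j : Fin 3),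
      pd i (fun z => u z j) x + pd j (fun z => u z i) x = 0) :
    ∃ c b : Fin 3 → ℝ, ∀ x : Fin 3 → ℝ, u x = c + crossProduct b x := by
  -- components are smooth
  have hf : ∀ j : Fin 3, ContDiff ℝ (⊤ : ℕ∞) (fun z => u z j) := fun j =>
    (ContinuousLinearMap.proj j : (Fin 3 → ℝ) →L[ℝ] ℝ).contDiff.comp hu
  have hg : ∀ i j : Fin 3, ContDiff ℝ (⊤ : ℕ∞) (pd i (fun z => u z j)) := fun i j =>
    pd_contDiff i (hf j)
  -- D a b c := pd a (pd b (u · c)); antisymmetry in last two indices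
  have hD2 : ∀ (a b c : Fin 3) (x : Fin 3 → ℝ),
      pd a (pd b (fun z => u z c)) x = - pd a (pd c (fun z => u z b)) x := by
    intro a b c x
    have hsum : (fun y => pd b (fun z => u z c) y + pd c (fun z => u z b) y)
        = fun _ => (0 : ℝ) := funext fun y => hdef y b c
    have h2 := pd_add a x ((hg b c).differentiable (by simp)).differentiableAt
      ((hg c b).differentiable (by simp)).differentiableAt
    rw [hsum] at h2
    have h0 : pd a (fun _ => (0 : ℝ)) x = 0 := by unfold pd; simp
    rw [h0] at h2
    linarith
  have hD1 : ∀ (a b c : Fin 3) (x : Fin 3 → ℝ),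
      pd a (pd b (fun z => u z c)) x = pd b (pd a (fun z => u z c)) x :=
    fun a b c x => pd_symm a b (hf c) x
  -- all second partials vanish
  have h0 : ∀ (k i j : Fin 3) (x : Fin 3 → ℝ), pd k (pd i (fun z => u z j)) x = 0 := by
    intro k i j x
    have d1 := hD2 k i j x
    have d2 := hD1 k j i x
    have d3 := hD2 j k i x
    have d4 := hD1 j i k x
    have d5 := hD2 i j k x
    have d6 := hD1 i k j x
    linarith
  -- first partials are constant
  set A : Fin 3 → Fin 3 → ℝ := fun i j => pd i (fun z => u z j) 0 with hA
  have hgconst : ∀ (i j : Fin 3) (x : Fin 3 → ℝ), pd i (fun z => u z j) x = A i j := by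
    intro i j x
    apply is_const_of_fderiv_eq_zero ((hg i j).differentiable (by simp))
    intro y
    apply clm_ext_basis (M := 0)
    intro k
    have := h0 k i j y
    unfold pd at this
    rw [ContinuousLinearMap.zero_apply]; exact this
  -- antisymmetry of A
  have hanti : ∀ i j : Fin 3, A i j + A j i = 0 := fun i j => hdef 0 i j
  -- the linear part
  set L : Fin 3 → (Fin 3 → ℝ) →L[ℝ] ℝ := fun j =>
    ∑ i, A i j • (ContinuousLinearMap.proj i : (Fin 3 → ℝ) →L[ℝ] ℝ) with hL
  have hLapp : ∀ (j k : Fin 3), L j (Pi.single k 1) = A k j := by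
    intro j k
    simp [hL, ContinuousLinearMap.sum_apply, Pi.single_apply]
  -- u is affine
  have haffine : ∀ (j : Fin 3) (x : Fin 3 → ℝ), u x j = u 0 j + L j x := by
    intro j x
    have hdiff : Differentiable ℝ (fun y => u y j - L j y) :=
      (hf j).differentiable (by simp) |>.sub (L j).differentiable
    have hconst : ∀ y, fderiv ℝ (fun y => u y j - L j y) y = 0 := by
      intro y
      rw [fderiv_fun_sub ((hf j).differentiable (by simp)).differentiableAt
        (L j).differentiableAt, (L j).fderiv]
      apply clm_ext_basis (M := 0)
      intro k
      have h1 := hgconst k j y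
      unfold pd at h1
      simp [h1, hLapp]
    have key := is_const_of_fderiv_eq_zero hdiff hconst x 0
    have hz : L j (0 : Fin 3 → ℝ) = 0 := map_zero _
    rw [hz, sub_zero] at key
    linarith [key]
  refine ⟨u 0, ![A 1 2, A 2 0, A 0 1], fun x => ?_⟩
  funext j
  have hLx : ∀ j, L j x = A 0 j * x 0 + A 1 j * x 1 + A 2 j * x 2 := by
    intro j
    simp [hL, ContinuousLinearMap.sum_apply, Fin.sum_univ_three]
    try ring
  have hAii : ∀ i, A i i = 0 := fun i => by linarith [hanti i i]
  rw [Pi.add_apply, haffine j x, hLx j]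
  fin_cases j <;>
    simp [crossProduct] <;>
    [linear_combination x 0 * hAii 0 + x 1 * hanti 0 1;
     linear_combination x 1 * hAii 1 + x 2 * hanti 1 2;
     linear_combination x 2 * hAii 2 + x 0 * hanti 0 2]
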